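/- Under the same assumptions (a_I independent, uniformly subgaussian with factor ν, Σ_I E|a_I| < ∞, |ψ(x)| ≤ C(1+|x|)^{−1−ε}), for each x ≠ y and every t > 0, P(|Σ_{I∈𝒟}(a_I − E a_I)ψ_I(x)ψ_I(y)| > t) ≤ 2 exp(−t²/(4ν Σ_{I∈𝒟} |ψ_I(x)|²|ψ_I(y)|²)); consequently ‖K(x,y;·) − K̄(x,y)‖_{L²(Ω,P)} ≤ B/|x−y| for some constant B, where K(x,y;ω) = Σ_I a_I(ω)ψ_I(x)ψ_I(y) and K̄(x,y) = Σ_I (E a_I)ψ_I(x)ψ_I(y). -/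

import Mathlib

/-!
Write `c_I = ψ_I(x) ψ_I(y)`. Each centred coefficient `a_I - E a_I` is sub-Gaussian with
variance proxy `ν`, so by independence every finite partial sum of `Σ_I (a_I - E a_I) c_I` is
sub-Gaussian with proxy at most `ν Σ_I c_I²`. Since `Σ_I E|a_I| < ∞` and the `c_I` are bounded,
the series converges almost surely, and Fatou's lemma carries the bound on the moment generating
function to the limit. The Chernoff bound gives the tail estimate, and a sub-Gaussian variable
with proxy `σ` has second moment at most `σ`, so `‖K - K̄‖_{L²} ≤ (ν Σ_I c_I²)^{1/2}`.

It remains to show `Σ_I c_I² ≲ |x - y|⁻²`. With `q = 2 + 2ε`, the decay of `ψ` gives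
`c_I² ≲ 4^j (1 + |2^j x - k|)^{-q} (1 + |2^j y - k|)^{-q}`; summing over `k` yields
`≲ 4^j (1 + 2^j |x - y|)^{-q}`, and the sum of these over `j` is `≲ |x - y|⁻²` because `q > 2`:
after rescaling `|x - y|` to `[1, 2)` it is dominated by two geometric series.
-/

open MeasureTheory ProbabilityTheory Real

/-- `ψ_I(x) = 2^{j/2} ψ(2^j x - k)` for the dyadic interval `I = [k 2^{-j}, (k+1) 2^{-j})`. -/
noncomputable def waveletDyadic (ψ : ℝ → ℝ) (j k : ℤ) (x : ℝ) : ℝ :=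
  (2 : ℝ) ^ ((j : ℝ) / 2) * ψ ((2 : ℝ) ^ j * x - k)

open Filter Topology
open scoped ENNReal NNReal

lemma summable_and_tsum_int_le_of_geometric {f : ℤ → ℝ} (hf : ∀ k, 0 ≤ f k) {β γ : ℝ}
    (hβ₀ : 0 ≤ β) (hβ₁ : β < 1) (hγ₀ : 0 ≤ γ) (hγ₁ : γ < 1)
    (hpos : ∀ m : ℕ, f m ≤ β ^ m) (hneg : ∀ m : ℕ, f (-(m + 1)) ≤ γ ^ m) :
    Summable f ∧ ∑' k, f k ≤ (1 - β)⁻¹ + (1 - γ)⁻¹ := by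
  have hβ := summable_geometric_of_lt_one hβ₀ hβ₁
  have hγ := summable_geometric_of_lt_one hγ₀ hγ₁
  have hs₁ : Summable fun m : ℕ => f m := hβ.of_nonneg_of_le (fun _ => hf _) hpos
  have hs₂ : Summable fun m : ℕ => f (-(m + 1)) := hγ.of_nonneg_of_le (fun _ => hf _) hneg
  refine ⟨.of_nat_of_neg_add_one hs₁ hs₂, ?_⟩
  rw [tsum_of_nat_of_neg_add_one hs₁ hs₂, ← tsum_geometric_of_lt_one hβ₀ hβ₁,
    ← tsum_geometric_of_lt_one hγ₀ hγ₁]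
  exact add_le_add (hs₁.tsum_le_tsum hpos hβ) (hs₂.tsum_le_tsum hneg hγ)

lemma summable_and_tsum_prod_le {β γ : Type*} {f : β × γ → ℝ} {g : β → ℝ} (hf : 0 ≤ f)
    (hrow : ∀ b, Summable fun c => f (b, c)) (hle : ∀ b, ∑' c, f (b, c) ≤ g b)
    (hg : Summable g) :
    Summable f ∧ ∑' x, f x ≤ ∑' b, g b := by
  have hrows : Summable fun b => ∑' c, f (b, c) :=
    hg.of_nonneg_of_le (fun b => tsum_nonneg fun c => hf _) hle
  have hsum : Summable f := (summable_prod_of_nonneg hf).mpr ⟨hrow, hrows⟩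
  exact ⟨hsum, (hsum.tsum_prod' hrow).le.trans (hrows.tsum_le_tsum hle hg)⟩

noncomputable def decay (q u : ℝ) : ℝ := (1 + |u|) ^ (-q)

section Decay

variable {q : ℝ}

lemma decay_pos (q u : ℝ) : 0 < decay q u := rpow_pos_of_pos (by positivity) _

lemma decay_le_one (hq : 0 ≤ q) (u : ℝ) : decay q u ≤ 1 :=
  rpow_le_one_of_one_le_of_nonpos (by linarith [abs_nonneg u]) (by linarith)

lemma sq_decay (q u : ℝ) : decay q u ^ 2 = decay (2 * q) u := by
  rw [decay, decay, ← rpow_natCast, ← rpow_mul (by positivity)]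
  ring_nf

lemma decay_le_two_rpow_mul (hq : 0 ≤ q) {u v : ℝ} (h : |v| ≤ 2 * |u| + 1) :
    decay q u ≤ 2 ^ q * decay q v := by
  have hle : (1 + |v|) / 2 ≤ 1 + |u| := by linarith
  calc decay q u ≤ ((1 + |v|) / 2) ^ (-q) :=
        rpow_le_rpow_of_nonpos (by positivity) hle (by linarith)
    _ = 2 ^ q * decay q v := by
        rw [div_rpow (by positivity) zero_le_two, rpow_neg zero_le_two, div_inv_eq_mul, mul_comm,
          decay]

lemma summable_decay_int (hq : 1 < q) : Summable fun k : ℤ => decay q k := by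
  have hnat : Summable fun n : ℕ => decay q n :=
    ((summable_nat_add_iff 1).mpr (summable_nat_rpow.mpr (by linarith : -q < -1))).congr
      fun n => by simp [decay, add_comm]
  exact summable_int_iff_summable_nat_and_neg.mpr ⟨hnat, hnat.congr fun n => by simp [decay]⟩

lemma decay_sub_int_le (hq : 0 ≤ q) (u : ℝ) (k : ℤ) :
    decay q (u - k) ≤ 2 ^ q * decay q ((k - ⌊u⌋ : ℤ) : ℝ) := by
  refine decay_le_two_rpow_mul hq ?_
  have hfloor : |u - ⌊u⌋| ≤ 1 := by
    rw [abs_of_nonneg (sub_nonneg.mpr (Int.floor_le u))]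
    linarith [Int.lt_floor_add_one u]
  push_cast
  calc |(k : ℝ) - ⌊u⌋| ≤ |(k : ℝ) - u| + |u - ⌊u⌋| := abs_sub_le _ _ _
    _ ≤ 2 * |u - k| + 1 := by rw [abs_sub_comm]; linarith [abs_nonneg (u - k)]

lemma summable_decay_int_sub_floor (hq : 1 < q) (u : ℝ) :
    Summable fun k : ℤ => decay q ((k - ⌊u⌋ : ℤ) : ℝ) :=
  (Equiv.subRight ⌊u⌋).summable_iff.mpr (summable_decay_int hq)

lemma summable_decay_sub_int (hq : 1 < q) (u : ℝ) : Summable fun k : ℤ => decay q (u - k) :=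
  ((summable_decay_int_sub_floor hq u).mul_left _).of_nonneg_of_le (fun _ => (decay_pos _ _).le)
    (decay_sub_int_le (by linarith) u)

lemma tsum_decay_sub_int_le (hq : 1 < q) (u : ℝ) :
    ∑' k : ℤ, decay q (u - k) ≤ 2 ^ q * ∑' k : ℤ, decay q k :=
  calc ∑' k : ℤ, decay q (u - k) ≤ ∑' k : ℤ, 2 ^ q * decay q ((k - ⌊u⌋ : ℤ) : ℝ) :=
        (summable_decay_sub_int hq u).tsum_le_tsum (decay_sub_int_le (by linarith) u)
          ((summable_decay_int_sub_floor hq u).mul_left _)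
    _ = 2 ^ q * ∑' k : ℤ, decay q k := by
        rw [tsum_mul_left]
        exact congrArg _ ((Equiv.subRight ⌊u⌋).tsum_eq fun k : ℤ => decay q k)

/-- One of `|u - w|`, `|v - w|` is at least `|u - v| / 2`. -/
lemma decay_mul_decay_le (hq : 0 ≤ q) (u v w : ℝ) :
    decay q (u - w) * decay q (v - w)
      ≤ 2 ^ q * decay q (u - v) * (decay q (u - w) + decay q (v - w)) := by
  have htri : |u - v| ≤ |u - w| + |v - w| := by
    simpa only [abs_sub_comm w v] using abs_sub_le u w v
  have hA := decay_pos q (u - w)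
  have hB := decay_pos q (v - w)
  rcases le_total |u - w| |v - w| with h | h
  · have := decay_le_two_rpow_mul hq (u := v - w) (v := u - v) (by linarith)
    nlinarith
  · have := decay_le_two_rpow_mul hq (u := u - w) (v := u - v) (by linarith)
    nlinarith

lemma summable_decay_mul_decay (hq : 1 < q) (u v : ℝ) :
    Summable fun k : ℤ => decay q (u - k) * decay q (v - k) :=
  (((summable_decay_sub_int hq u).add (summable_decay_sub_int hq v)).mul_left
    (2 ^ q * decay q (u - v))).of_nonneg_of_le
    (fun _ => mul_nonneg (decay_pos _ _).le (decay_pos _ _).le)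
    (fun k => decay_mul_decay_le (by linarith) u v k)

lemma tsum_decay_mul_decay_le (hq : 1 < q) (u v : ℝ) :
    ∑' k : ℤ, decay q (u - k) * decay q (v - k)
      ≤ 2 * 4 ^ q * (∑' k : ℤ, decay q k) * decay q (u - v) := by
  have hu := summable_decay_sub_int hq u
  have hv := summable_decay_sub_int hq v
  calc ∑' k : ℤ, decay q (u - k) * decay q (v - k)
      ≤ ∑' k : ℤ, 2 ^ q * decay q (u - v) * (decay q (u - k) + decay q (v - k)) :=
        (summable_decay_mul_decay hq u v).tsum_le_tsum
          (fun k => decay_mul_decay_le (by linarith) u v k) ((hu.add hv).mul_left _)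
    _ = 2 ^ q * decay q (u - v) * (∑' k : ℤ, decay q (u - k) + ∑' k : ℤ, decay q (v - k)) := by
        rw [tsum_mul_left, hu.tsum_add hv]
    _ ≤ 2 ^ q * decay q (u - v) *
          (2 ^ q * ∑' k : ℤ, decay q k + 2 ^ q * ∑' k : ℤ, decay q k) := by
        have := (decay_pos q (u - v)).le
        gcongr
        exacts [tsum_decay_sub_int_le hq u, tsum_decay_sub_int_le hq v]
    _ = 2 * 4 ^ q * (∑' k : ℤ, decay q k) * decay q (u - v) := by
        rw [show (4 : ℝ) = 2 * 2 by norm_num, mul_rpow zero_le_two zero_le_two]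
        ring

lemma sq_mul_decay_le_sq (hq : 0 ≤ q) (s : ℝ) : s ^ 2 * decay q s ≤ s ^ 2 :=
  mul_le_of_le_one_right (sq_nonneg s) (decay_le_one hq s)

lemma sq_mul_decay_le_rpow {s : ℝ} (hq : 0 ≤ q) (hs : 0 < s) :
    s ^ 2 * decay q s ≤ s ^ (2 - q) := by
  have : decay q s ≤ s ^ (-q) :=
    rpow_le_rpow_of_nonpos hs (by rw [abs_of_pos hs]; linarith) (by linarith)
  calc s ^ 2 * decay q s ≤ s ^ 2 * s ^ (-q) := by gcongr
    _ = s ^ (2 - q) := by rw [← rpow_natCast, ← rpow_add hs]; norm_num [sub_eq_add_neg]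

lemma summable_and_tsum_zpow_mul_sq_mul_decay_le (hq : 2 < q) {r : ℝ} (hr₁ : 1 ≤ r)
    (hr₂ : r < 2) :
    Summable (fun i : ℤ => (2 ^ i * r) ^ 2 * decay q (2 ^ i * r)) ∧
      ∑' i : ℤ, (2 ^ i * r) ^ 2 * decay q (2 ^ i * r) ≤ (1 - 2 ^ (2 - q))⁻¹ + (1 - 4⁻¹)⁻¹ := by
  refine summable_and_tsum_int_le_of_geometric
    (fun i => mul_nonneg (sq_nonneg _) (decay_pos _ _).le) (by positivity)
    (rpow_lt_one_of_one_lt_of_neg one_lt_two (by linarith)) (by norm_num) (by norm_num)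
    (fun m => ?_) (fun m => ?_)
  · calc (2 ^ (m : ℤ) * r) ^ 2 * decay q (2 ^ (m : ℤ) * r) ≤ (2 ^ (m : ℤ) * r) ^ (2 - q) :=
          sq_mul_decay_le_rpow (by linarith) (by positivity)
      _ ≤ (2 ^ (m : ℝ)) ^ (2 - q) := by
          refine rpow_le_rpow_of_nonpos (by positivity) ?_ (by linarith)
          rw [zpow_natCast, rpow_natCast]
          exact le_mul_of_one_le_right (by positivity) hr₁
      _ = (2 ^ (2 - q)) ^ m := by
          rw [← rpow_mul zero_le_two, mul_comm, rpow_mul zero_le_two, rpow_natCast]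
  · calc (2 ^ (-((m : ℤ) + 1)) * r) ^ 2 * decay q (2 ^ (-((m : ℤ) + 1)) * r)
        ≤ (2 ^ (-((m : ℤ) + 1)) * r) ^ 2 := sq_mul_decay_le_sq (by linarith) _
      _ ≤ (2 ^ (-((m : ℤ) + 1)) * 2) ^ 2 := by gcongr
      _ = 4⁻¹ ^ m := by
          rw [zpow_neg, zpow_add₀ two_ne_zero, zpow_one, zpow_natCast]
          field_simp
          rw [← pow_mul, mul_comm m 2, pow_mul, ← mul_pow]
          norm_num

lemma summable_and_tsum_zpow_sq_mul_decay_le (hq : 2 < q) {D : ℝ} (hD : 0 < D) :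
    Summable (fun j : ℤ => ((2 : ℝ) ^ j) ^ 2 * decay q (2 ^ j * D)) ∧
      ∑' j : ℤ, ((2 : ℝ) ^ j) ^ 2 * decay q (2 ^ j * D)
        ≤ ((1 - 2 ^ (2 - q))⁻¹ + (1 - 4⁻¹)⁻¹) / D ^ 2 := by
  obtain ⟨n, hn₁, hn₂⟩ := exists_mem_Ico_zpow hD one_lt_two
  have h2n : (0 : ℝ) < 2 ^ n := by positivity
  set r := D / 2 ^ n
  have hr₁ : 1 ≤ r := (one_le_div h2n).mpr hn₁
  have hr₂ : r < 2 := by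
    rw [div_lt_iff₀ h2n]
    rwa [zpow_add_one₀ two_ne_zero, mul_comm] at hn₂
  obtain ⟨hsum, hle⟩ := summable_and_tsum_zpow_mul_sq_mul_decay_le hq hr₁ hr₂
  set g : ℤ → ℝ := fun i => (2 ^ i * r) ^ 2 * decay q (2 ^ i * r)
  have hterm : ∀ j : ℤ, ((2 : ℝ) ^ j) ^ 2 * decay q (2 ^ j * D) = g (j + n) / D ^ 2 := by
    intro j
    have : 2 ^ (j + n) * r = 2 ^ j * D := by
      rw [zpow_add₀ two_ne_zero, mul_assoc, mul_div_cancel₀ _ h2n.ne']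
    simp only [g, this]
    field_simp
  simp_rw [hterm]
  refine ⟨((Equiv.addRight n).summable_iff.mpr hsum).div_const _, ?_⟩
  rw [tsum_div_const, show ∑' j : ℤ, g (j + n) = ∑' i, g i from (Equiv.addRight n).tsum_eq g]
  gcongr

end Decay

section Wavelet

variable {ψ : ℝ → ℝ} {C p : ℝ}

lemma sq_waveletDyadic_le (hψ : ∀ x, |ψ x| ≤ C * decay p x) (j k : ℤ) (z : ℝ) :
    waveletDyadic ψ j k z ^ 2 ≤ 2 ^ j * (C * decay p (2 ^ j * z - k)) ^ 2 := by
  have h2j : ((2 : ℝ) ^ ((j : ℝ) / 2)) ^ 2 = 2 ^ j := by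
    rw [← rpow_natCast, ← rpow_mul zero_le_two]
    norm_num
  rw [waveletDyadic, mul_pow, h2j, ← sq_abs (ψ _)]
  gcongr
  exact hψ _

lemma sq_waveletDyadic_mul_sq_le (hψ : ∀ x, |ψ x| ≤ C * decay p x) (j k : ℤ) (x y : ℝ) :
    waveletDyadic ψ j k x ^ 2 * waveletDyadic ψ j k y ^ 2
      ≤ C ^ 4 * ((2 : ℝ) ^ j) ^ 2 *
        (decay (2 * p) (2 ^ j * x - k) * decay (2 * p) (2 ^ j * y - k)) := by
  calc _ ≤ 2 ^ j * (C * decay p (2 ^ j * x - k)) ^ 2 *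
        (2 ^ j * (C * decay p (2 ^ j * y - k)) ^ 2) :=
        mul_le_mul (sq_waveletDyadic_le hψ j k x) (sq_waveletDyadic_le hψ j k y) (sq_nonneg _)
          (by positivity)
    _ = _ := by rw [← sq_decay, ← sq_decay]; ring

lemma summable_and_tsum_sq_waveletDyadic_mul_sq_row_le (hp : 1 < 2 * p)
    (hψ : ∀ x, |ψ x| ≤ C * decay p x) (j : ℤ) (x y : ℝ) :
    Summable (fun k : ℤ => waveletDyadic ψ j k x ^ 2 * waveletDyadic ψ j k y ^ 2) ∧
      ∑' k : ℤ, waveletDyadic ψ j k x ^ 2 * waveletDyadic ψ j k y ^ 2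
        ≤ C ^ 4 * (2 * 4 ^ (2 * p) * ∑' k : ℤ, decay (2 * p) k) *
          (((2 : ℝ) ^ j) ^ 2 * decay (2 * p) (2 ^ j * |x - y|)) := by
  have hk := (summable_decay_mul_decay hp (2 ^ j * x) (2 ^ j * y)).mul_left
    (C ^ 4 * ((2 : ℝ) ^ j) ^ 2)
  have hdom := fun k : ℤ => sq_waveletDyadic_mul_sq_le hψ j k x y
  have hs := hk.of_nonneg_of_le (fun k => by positivity) hdom
  refine ⟨hs, ?_⟩
  calc _ ≤ _ := hs.tsum_le_tsum hdom hk
    _ = C ^ 4 * ((2 : ℝ) ^ j) ^ 2 *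
          ∑' k : ℤ, decay (2 * p) (2 ^ j * x - k) * decay (2 * p) (2 ^ j * y - k) :=
        tsum_mul_left
    _ ≤ C ^ 4 * ((2 : ℝ) ^ j) ^ 2 * (2 * 4 ^ (2 * p) * (∑' k : ℤ, decay (2 * p) k) *
          decay (2 * p) (2 ^ j * x - 2 ^ j * y)) := by
        gcongr
        exact tsum_decay_mul_decay_le hp _ _
    _ = _ := by
        rw [← mul_sub, decay, decay, abs_mul, abs_mul, abs_abs]
        ring

theorem exists_tsum_sq_waveletDyadic_mul_sq_le (hC : 0 < C) (hp : 1 < p)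
    (hψ : ∀ x, |ψ x| ≤ C * decay p x) :
    ∃ A > 0, ∀ x y : ℝ, x ≠ y →
      Summable (fun I : ℤ × ℤ => waveletDyadic ψ I.1 I.2 x ^ 2 * waveletDyadic ψ I.1 I.2 y ^ 2) ∧
      ∑' I : ℤ × ℤ, waveletDyadic ψ I.1 I.2 x ^ 2 * waveletDyadic ψ I.1 I.2 y ^ 2
        ≤ A / |x - y| ^ 2 := by
  have hq : 2 < 2 * p := by linarith
  set K := 2 * 4 ^ (2 * p) * ∑' k : ℤ, decay (2 * p) k
  set M : ℝ := (1 - 2 ^ (2 - 2 * p))⁻¹ + (1 - 4⁻¹)⁻¹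
  have hK : 0 < K := by
    have := (summable_decay_int (by linarith : 1 < 2 * p)).tsum_pos
      (fun k => (decay_pos _ k).le) 0 (decay_pos _ ((0 : ℤ) : ℝ))
    positivity
  have hM : 0 < M := by
    have : (2 : ℝ) ^ (2 - 2 * p) < 1 := rpow_lt_one_of_one_lt_of_neg one_lt_two (by linarith)
    have : 0 < (1 - (2 : ℝ) ^ (2 - 2 * p))⁻¹ := inv_pos.mpr (by linarith)
    positivity
  refine ⟨C ^ 4 * K * M, by positivity, fun x y hxy => ?_⟩
  obtain ⟨hdyadic, hdyadic_le⟩ :=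
    summable_and_tsum_zpow_sq_mul_decay_le hq (abs_pos.mpr (sub_ne_zero.mpr hxy))
  have hrow := summable_and_tsum_sq_waveletDyadic_mul_sq_row_le (by linarith) hψ (x := x) (y := y)
  obtain ⟨hf, hf_le⟩ := summable_and_tsum_prod_le
    (f := fun I : ℤ × ℤ => waveletDyadic ψ I.1 I.2 x ^ 2 * waveletDyadic ψ I.1 I.2 y ^ 2)
    (fun I => by positivity) (fun j => (hrow j).1) (fun j => (hrow j).2)
    (hdyadic.mul_left (C ^ 4 * K))
  refine ⟨hf, hf_le.trans ?_⟩
  rw [tsum_mul_left, mul_div_assoc]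
  gcongr

end Wavelet

lemma Real.sq_div_two_le_cosh_sub_one (x : ℝ) : x ^ 2 / 2 ≤ cosh x - 1 := by
  have h := sum_le_hasSum (Finset.range 2)
    (fun n _ => div_nonneg ((even_two_mul n).pow_nonneg x) (Nat.cast_nonneg _)) (hasSum_cosh x)
  norm_num [Finset.sum_range_succ] at h
  linarith

lemma Real.exp_sub_one_le_mul_exp (u : ℝ) : exp u - 1 ≤ u * exp u := by
  have hinv : exp (-u) * exp u = 1 := by rw [← exp_add, neg_add_cancel, exp_zero]
  nlinarith [mul_le_mul_of_nonneg_right (one_sub_le_exp_neg u) (exp_pos u).le]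

lemma ProbabilityTheory.hasSubgaussianMGF_of_cgf_le {Ω : Type*} {mΩ : MeasurableSpace Ω}
    {μ : Measure Ω} [NeZero μ] {X : Ω → ℝ} {c : ℝ≥0}
    (hint : ∀ t, Integrable (fun ω => exp (t * X ω)) μ) (hcgf : ∀ t, cgf X μ t ≤ c * t ^ 2 / 2) :
    HasSubgaussianMGF X c μ :=
  ⟨hint, fun t => exp_cgf (hint t) ▸ exp_le_exp.mpr (hcgf t)⟩

namespace ProbabilityTheory.HasSubgaussianMGF

variable {Ω : Type*} {mΩ : MeasurableSpace Ω} {μ : Measure Ω} {X : Ω → ℝ} {c : ℝ≥0}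

lemma mono (h : HasSubgaussianMGF X c μ) {c' : ℝ≥0} (hc : c ≤ c') :
    HasSubgaussianMGF X c' μ where
  integrable_exp_mul := h.integrable_exp_mul
  mgf_le t := (h.mgf_le t).trans (exp_le_exp.mpr (by gcongr))

lemma measure_lt_abs_le [IsFiniteMeasure μ] (h : HasSubgaussianMGF X c μ) {t : ℝ} (ht : 0 ≤ t) :
    μ {ω | t < |X ω|} ≤ ENNReal.ofReal (2 * exp (-t ^ 2 / (2 * c))) := by
  have hsplit : {ω | t < |X ω|} ⊆ {ω | t ≤ X ω} ∪ {ω | t ≤ (-X) ω} := fun ω hω => by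
    rcases lt_abs.mp (show t < |X ω| from hω) with hX | hX
    exacts [Or.inl hX.le, Or.inr hX.le]
  calc μ {ω | t < |X ω|} ≤ μ {ω | t ≤ X ω} + μ {ω | t ≤ (-X) ω} :=
        (measure_mono hsplit).trans (measure_union_le _ _)
    _ = ENNReal.ofReal (μ.real {ω | t ≤ X ω} + μ.real {ω | t ≤ (-X) ω}) := by
        rw [ENNReal.ofReal_add measureReal_nonneg measureReal_nonneg, ofReal_measureReal,
          ofReal_measureReal]
    _ ≤ _ := ENNReal.ofReal_le_ofReal (by linarith [h.measure_ge_le ht, h.neg.measure_ge_le ht])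

lemma integrable_cosh_mul (h : HasSubgaussianMGF X c μ) (s : ℝ) :
    Integrable (fun ω => cosh (s * X ω)) μ := by
  simp_rw [cosh_eq, ← neg_mul]
  exact ((h.integrable_exp_mul s).add (h.integrable_exp_mul (-s))).div_const 2

lemma integral_cosh_mul_le (h : HasSubgaussianMGF X c μ) (s : ℝ) :
    ∫ ω, cosh (s * X ω) ∂μ ≤ exp (c * s ^ 2 / 2) := by
  have hmgf : ∫ ω, cosh (s * X ω) ∂μ = (mgf X μ s + mgf X μ (-s)) / 2 := by
    simp_rw [cosh_eq, ← neg_mul]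
    rw [integral_div, integral_add (h.integrable_exp_mul s) (h.integrable_exp_mul (-s)), mgf, mgf]
  have hneg := h.mgf_le (-s)
  rw [neg_sq] at hneg
  linarith [h.mgf_le s]

/-- From `x² / 2 ≤ cosh x - 1` and `exp u - 1 ≤ u exp u`. -/
lemma integral_sq_le_mul_exp [IsProbabilityMeasure μ] (h : HasSubgaussianMGF X c μ) {s : ℝ}
    (hs : 0 < s) : ∫ ω, X ω ^ 2 ∂μ ≤ c * exp (c * s ^ 2 / 2) := by
  have hcosh_sub : ∫ ω, (cosh (s * X ω) - 1) ∂μ = ∫ ω, cosh (s * X ω) ∂μ - 1 := by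
    simp [integral_sub (h.integrable_cosh_mul s) (integrable_const 1)]
  have hmoment : s ^ 2 / 2 * ∫ ω, X ω ^ 2 ∂μ ≤ ∫ ω, cosh (s * X ω) ∂μ - 1 := by
    rw [← integral_const_mul, ← hcosh_sub]
    refine integral_mono ((h.memLp 2).integrable_sq.const_mul _)
      ((h.integrable_cosh_mul s).sub (integrable_const _)) fun ω => ?_
    simpa [mul_pow, mul_div_right_comm, mul_comm] using sq_div_two_le_cosh_sub_one (s * X ω)
  refine le_of_mul_le_mul_left ?_ (by positivity : 0 < s ^ 2 / 2)
  calc s ^ 2 / 2 * ∫ ω, X ω ^ 2 ∂μ ≤ exp (c * s ^ 2 / 2) - 1 :=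
        hmoment.trans (by linarith [h.integral_cosh_mul_le s])
    _ ≤ c * s ^ 2 / 2 * exp (c * s ^ 2 / 2) := exp_sub_one_le_mul_exp _
    _ = s ^ 2 / 2 * (c * exp (c * s ^ 2 / 2)) := by ring

lemma integral_sq_le [IsProbabilityMeasure μ] (h : HasSubgaussianMGF X c μ) :
    ∫ ω, X ω ^ 2 ∂μ ≤ c := by
  have hlim : Tendsto (fun s : ℝ => (c : ℝ) * exp (c * s ^ 2 / 2)) (𝓝[>] 0) (𝓝 c) := by
    have hcont : Continuous (fun s : ℝ => (c : ℝ) * exp (c * s ^ 2 / 2)) := by fun_prop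
    simpa using hcont.continuousWithinAt.tendsto (s := Set.Ioi 0) (x := 0)
  exact ge_of_tendsto hlim (eventually_nhdsWithin_of_forall fun s hs => h.integral_sq_le_mul_exp hs)

lemma eLpNorm_two_le [IsProbabilityMeasure μ] (h : HasSubgaussianMGF X c μ) :
    eLpNorm X 2 μ ≤ ENNReal.ofReal √c := by
  rw [(h.memLp 2).eLpNorm_eq_integral_rpow_norm two_ne_zero ENNReal.ofNat_ne_top]
  refine ENNReal.ofReal_le_ofReal ?_
  simp only [ENNReal.toReal_ofNat, rpow_two, norm_eq_abs, sq_abs, ← one_div, ← sqrt_eq_rpow]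
  exact sqrt_le_sqrt h.integral_sq_le

/-- Fatou's lemma for the moment generating functions. -/
lemma of_tendsto_ae {Y : ℕ → Ω → ℝ} (hY : ∀ n, HasSubgaussianMGF (Y n) c μ)
    (hlim : ∀ᵐ ω ∂μ, Tendsto (fun n => Y n ω) atTop (𝓝 (X ω))) :
    HasSubgaussianMGF X c μ := by
  have hX : AEStronglyMeasurable X μ :=
    aestronglyMeasurable_of_tendsto_ae atTop (fun n => (hY n).aestronglyMeasurable) hlim
  have hlintegral : ∀ t, ∫⁻ ω, ENNReal.ofReal (exp (t * X ω)) ∂μ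
      ≤ ENNReal.ofReal (exp (c * t ^ 2 / 2)) := by
    intro t
    have hcont : Continuous fun x : ℝ => ENNReal.ofReal (exp (t * x)) :=
      ENNReal.continuous_ofReal.comp (by fun_prop)
    calc ∫⁻ ω, ENNReal.ofReal (exp (t * X ω)) ∂μ
        = ∫⁻ ω, liminf (fun n => ENNReal.ofReal (exp (t * Y n ω))) atTop ∂μ := by
          refine lintegral_congr_ae ?_
          filter_upwards [hlim] with ω hω
          exact ((hcont.tendsto _).comp hω).liminf_eq.symm
      _ ≤ liminf (fun n => ∫⁻ ω, ENNReal.ofReal (exp (t * Y n ω)) ∂μ) atTop :=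
          lintegral_liminf_le' fun n => hcont.measurable.comp_aemeasurable (hY n).aemeasurable
      _ ≤ ENNReal.ofReal (exp (c * t ^ 2 / 2)) := by
          refine liminf_le_of_frequently_le' (Frequently.of_forall fun n => ?_)
          rw [← ofReal_integral_eq_lintegral_ofReal ((hY n).integrable_exp_mul t)
            (ae_of_all _ fun _ => (exp_pos _).le)]
          exact ENNReal.ofReal_le_ofReal ((hY n).mgf_le t)
  have hint : ∀ t, Integrable (fun ω => exp (t * X ω)) μ := fun t =>
    ⟨continuous_exp.comp_aestronglyMeasurable (hX.const_mul t),
      (hasFiniteIntegral_iff_ofReal (ae_of_all _ fun _ => (exp_pos _).le)).mpr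
        ((hlintegral t).trans_lt ENNReal.ofReal_lt_top)⟩
  refine ⟨hint, fun t => ?_⟩
  rw [← ENNReal.ofReal_le_ofReal_iff (exp_pos _).le, mgf,
    ofReal_integral_eq_lintegral_ofReal (hint t) (ae_of_all _ fun _ => (exp_pos _).le)]
  exact hlintegral t

lemma tsum_of_iIndepFun {ι : Type*} [Countable ι] {Y : ι → Ω → ℝ} (hind : iIndepFun Y μ)
    {c : ι → ℝ≥0} (hY : ∀ i, HasSubgaussianMGF (Y i) (c i) μ) (hc : Summable c)
    (hsum : ∀ᵐ ω ∂μ, Summable fun i => Y i ω) :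
    HasSubgaussianMGF (fun ω => ∑' i, Y i ω) (∑' i, c i) μ := by
  obtain ⟨u, hu⟩ := exists_seq_tendsto (atTop : Filter (Finset ι))
  refine of_tendsto_ae (Y := fun n ω => ∑ i ∈ u n, Y i ω) (fun n =>
    (sum_of_iIndepFun hind (s := u n) fun i _ => hY i).mono
      (hc.sum_le_tsum _ fun _ _ => zero_le)) ?_
  filter_upwards [hsum] with ω hω
  exact hω.hasSum.comp hu

end ProbabilityTheory.HasSubgaussianMGF

lemma MeasureTheory.ae_summable_of_summable_integral_norm {Ω ι : Type*} [Countable ι]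
    {mΩ : MeasurableSpace Ω} {μ : Measure Ω} {f : ι → Ω → ℝ} (hf : ∀ i, Integrable (f i) μ)
    (hsum : Summable fun i => ∫ ω, ‖f i ω‖ ∂μ) :
    ∀ᵐ ω ∂μ, Summable fun i => f i ω := by
  have hfinite : ∑' i, eLpNorm (f i) 1 μ ≠ ∞ := by
    simp_rw [eLpNorm_one_eq_lintegral_enorm, ← ofReal_integral_norm_eq_lintegral_enorm (hf _)]
    rw [← ENNReal.ofReal_tsum_of_nonneg (fun i => integral_nonneg fun _ => norm_nonneg _) hsum]
    exact ENNReal.ofReal_ne_top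
  filter_upwards [summable_norm_of_tsum_eLpNorm_ne_top le_rfl (fun i => (hf i).1) hfinite]
    with ω hω using hω.of_norm

section RandomSeries

variable {Ω ι : Type*} {mΩ : MeasurableSpace Ω} {μ : Measure Ω} {a : ι → Ω → ℝ} {c : ι → ℝ}

lemma abs_le_sqrt_tsum_sq (hc : Summable fun i => c i ^ 2) (i : ι) :
    |c i| ≤ √(∑' j, c j ^ 2) := by
  rw [← sqrt_sq_eq_abs]
  exact sqrt_le_sqrt (hc.le_tsum i fun j _ => sq_nonneg _)

lemma summable_integral_norm_mul (habs : Summable fun i => ∫ ω, |a i ω| ∂μ)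
    (hc : Summable fun i => c i ^ 2) :
    Summable fun i => ∫ ω, ‖a i ω * c i‖ ∂μ := by
  refine (habs.mul_right √(∑' j, c j ^ 2)).of_nonneg_of_le
    (fun i => integral_nonneg fun _ => norm_nonneg _) fun i => ?_
  simp_rw [norm_mul, integral_mul_const, norm_eq_abs]
  exact mul_le_mul_of_nonneg_left (abs_le_sqrt_tsum_sq hc i)
    (integral_nonneg fun _ => abs_nonneg _)

lemma summable_integral_mul (habs : Summable fun i => ∫ ω, |a i ω| ∂μ)
    (hc : Summable fun i => c i ^ 2) :
    Summable fun i => (∫ ω, a i ω ∂μ) * c i :=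
  (summable_integral_norm_mul habs hc).of_norm_bounded fun i => by
    rw [← integral_mul_const]
    exact norm_integral_le_integral_norm _

lemma ae_summable_mul [Countable ι] (hint : ∀ i, Integrable (a i) μ)
    (habs : Summable fun i => ∫ ω, |a i ω| ∂μ) (hc : Summable fun i => c i ^ 2) :
    ∀ᵐ ω ∂μ, Summable fun i => a i ω * c i :=
  ae_summable_of_summable_integral_norm (fun i => (hint i).mul_const _)
    (summable_integral_norm_mul habs hc)

lemma tsum_mul_sub_tsum_integral_mul_ae_eq [Countable ι] (hint : ∀ i, Integrable (a i) μ)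
    (habs : Summable fun i => ∫ ω, |a i ω| ∂μ) (hc : Summable fun i => c i ^ 2) :
    (fun ω => ∑' i, a i ω * c i - ∑' i, (∫ w, a i w ∂μ) * c i)
      =ᵐ[μ] fun ω => ∑' i, (a i ω - ∫ w, a i w ∂μ) * c i := by
  filter_upwards [ae_summable_mul hint habs hc] with ω hω
  rw [← hω.tsum_sub (summable_integral_mul habs hc)]
  exact tsum_congr fun i => (sub_mul _ _ _).symm

lemma hasSubgaussianMGF_tsum_sub_integral_mul [Countable ι] {ν : ℝ≥0} (hind : iIndepFun a μ)
    (hint : ∀ i, Integrable (a i) μ) (habs : Summable fun i => ∫ ω, |a i ω| ∂μ)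
    (hsub : ∀ i, HasSubgaussianMGF (fun ω => a i ω - ∫ w, a i w ∂μ) ν μ)
    (hc : Summable fun i => c i ^ 2) :
    HasSubgaussianMGF (fun ω => ∑' i, (a i ω - ∫ w, a i w ∂μ) * c i)
      (∑' i, ‖c i‖₊ ^ 2 * ν) μ := by
  have hterm : ∀ i, HasSubgaussianMGF (fun ω => (a i ω - ∫ w, a i w ∂μ) * c i)
      (‖c i‖₊ ^ 2 * ν) μ := fun i => by
    convert (hsub i).const_mul (c i) using 1
    · exact funext fun ω => mul_comm _ _
    · congr 1
      exact NNReal.eq (by simp only [NNReal.coe_pow, coe_nnnorm, norm_eq_abs, sq_abs]; rfl)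
  have hparam : Summable fun i => ‖c i‖₊ ^ 2 * ν :=
    NNReal.summable_coe.mp (by simpa using hc.mul_right (ν : ℝ))
  refine HasSubgaussianMGF.tsum_of_iIndepFun
    (hind.comp (fun i z => (z - ∫ w, a i w ∂μ) * c i) fun i => by fun_prop) hterm hparam ?_
  filter_upwards [ae_summable_mul hint habs hc] with ω hω
  exact (hω.sub (summable_integral_mul habs hc)).congr fun i => (sub_mul _ _ _).symm

end RandomSeries

/-- Concentration of the random kernel about its mean kernel: the subgaussian tail bound
for `Σ_I (a_I - E a_I) ψ_I(x) ψ_I(y)` and the consequent Calderón–Zygmund size estimate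
`‖K(x,y;·) - K̄(x,y)‖_{L²(Ω,P)} ≤ B / |x - y|`. -/
theorem random_wavelet_kernel_concentration
    {Ω : Type*} [MeasureSpace Ω] [IsProbabilityMeasure (ℙ : Measure Ω)]
    (ψ : ℝ → ℝ) (C ε : ℝ) (hC : 0 < C) (hε : 0 < ε)
    (hψ : ∀ x : ℝ, |ψ x| ≤ C * (1 + |x|) ^ (-(1 + ε)))
    (a : ℤ × ℤ → Ω → ℝ) (ν : ℝ) (hν : 0 < ν)
    (hind : iIndepFun a ℙ)
    (hint : ∀ I, Integrable (a I) ℙ)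
    (habs : Summable (fun I => ∫ ω, |a I ω| ∂ℙ))
    (hmgf : ∀ I, ∀ l : ℝ,
      Integrable (fun ω => exp (l * (a I ω - ∫ x, a I x ∂ℙ))) ℙ)
    (hsub : ∀ I, ∀ l : ℝ,
      log (∫ ω, exp (l * (a I ω - ∫ x, a I x ∂ℙ)) ∂ℙ) ≤ l ^ 2 * ν / 2) :
    ∃ B : ℝ, 0 < B ∧ ∀ x y : ℝ, x ≠ y →
      (∀ t : ℝ, 0 < t →
        ℙ {ω | t < |∑' I : ℤ × ℤ,
            (a I ω - ∫ w, a I w ∂ℙ) * waveletDyadic ψ I.1 I.2 x * waveletDyadic ψ I.1 I.2 y|}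
          ≤ ENNReal.ofReal (2 * exp (-t ^ 2 /
              (4 * ν * ∑' I : ℤ × ℤ,
                (waveletDyadic ψ I.1 I.2 x) ^ 2 * (waveletDyadic ψ I.1 I.2 y) ^ 2)))) ∧
      eLpNorm (fun ω =>
          (∑' I : ℤ × ℤ, a I ω * waveletDyadic ψ I.1 I.2 x * waveletDyadic ψ I.1 I.2 y)
          - ∑' I : ℤ × ℤ,
              (∫ w, a I w ∂ℙ) * waveletDyadic ψ I.1 I.2 x * waveletDyadic ψ I.1 I.2 y) 2 ℙ
        ≤ ENNReal.ofReal (B / |x - y|) := by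
  obtain ⟨A, hA, hkernel⟩ := exists_tsum_sq_waveletDyadic_mul_sq_le hC (by linarith) hψ
  refine ⟨√(ν * A), by positivity, fun x y hxy => ?_⟩
  obtain ⟨hc, hS⟩ := hkernel x y hxy
  simp_rw [mul_assoc]
  simp_rw [← mul_pow] at hc hS ⊢
  set c : ℤ × ℤ → ℝ := fun I => waveletDyadic ψ I.1 I.2 x * waveletDyadic ψ I.1 I.2 y
  set S := ∑' I, c I ^ 2
  have hcentred : ∀ I, HasSubgaussianMGF (fun ω => a I ω - ∫ w, a I w ∂ℙ) ν.toNNReal ℙ :=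
    fun I => hasSubgaussianMGF_of_cgf_le (hmgf I) fun l =>
      (hsub I l).trans_eq (by rw [coe_toNNReal _ hν.le]; ring)
  have hX := hasSubgaussianMGF_tsum_sub_integral_mul hind hint habs hcentred hc
  have hσ : ((∑' I, ‖c I‖₊ ^ 2 * ν.toNNReal : ℝ≥0) : ℝ) = ν * S := by
    rw [NNReal.coe_tsum, ← tsum_mul_left]
    exact tsum_congr fun I => by simp [coe_toNNReal _ hν.le, mul_comm]
  refine ⟨fun t ht => ?_, ?_⟩
  · have htail := (hX.mono (le_mul_of_one_le_left zero_le one_le_two)).measure_lt_abs_le ht.le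
    refine htail.trans_eq ?_
    rw [NNReal.coe_mul, hσ, NNReal.coe_two, ← mul_assoc, show (2 : ℝ) * 2 = 4 by norm_num]
  · rw [eLpNorm_congr_ae (tsum_mul_sub_tsum_integral_mul_ae_eq hint habs hc)]
    refine hX.eLpNorm_two_le.trans (ENNReal.ofReal_le_ofReal ?_)
    rw [hσ]
    calc √(ν * S) ≤ √(ν * A / |x - y| ^ 2) := sqrt_le_sqrt (by rw [mul_div_assoc]; gcongr)
      _ = √(ν * A) / |x - y| := by rw [sqrt_div' _ (by positivity), sqrt_sq (abs_nonneg _)]
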